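/- The set of complex points Υ(ℂ) of the surface parametrizing cuboids is path-connected. -/

import Mathlib

open scoped LinearAlgebra.Projectivization

noncomputable section

/-- Complex projective space `ℙ⁶(ℂ)` with the Euclidean (quotient) topology. -/
instance : TopologicalSpace (ℙ ℂ (Fin 7 → ℂ)) :=
  inferInstanceAs (TopologicalSpace (Quotient (projectivizationSetoid ℂ (Fin 7 → ℂ))))

/-- The set of complex points `Υ(ℂ)` of the surface parametrizing cuboids, inside `ℙ⁶(ℂ)`.
Homogeneous coordinates: `A,B,C,X,Y,Z,U` are `v 0, …, v 6`. -/
def UpsilonC : Set (ℙ ℂ (Fin 7 → ℂ)) :=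
  {p | ∃ (v : Fin 7 → ℂ) (hv : v ≠ 0), Projectivization.mk ℂ v hv = p ∧
    v 0 ^ 2 + v 1 ^ 2 - v 5 ^ 2 = 0 ∧ v 1 ^ 2 + v 2 ^ 2 - v 3 ^ 2 = 0 ∧
    v 2 ^ 2 + v 0 ^ 2 - v 4 ^ 2 = 0 ∧ v 0 ^ 2 + v 3 ^ 2 - v 6 ^ 2 = 0}

/-! ### Auxiliary material -/

namespace UpsilonAux

/- component-evaluation helper lemmas -/
private lemma capp0 (a b c d e f g : ℂ) : (![a,b,c,d,e,f,g] : Fin 7 → ℂ) 0 = a := rfl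
private lemma capp1 (a b c d e f g : ℂ) : (![a,b,c,d,e,f,g] : Fin 7 → ℂ) 1 = b := rfl
private lemma capp2 (a b c d e f g : ℂ) : (![a,b,c,d,e,f,g] : Fin 7 → ℂ) 2 = c := rfl
private lemma capp3 (a b c d e f g : ℂ) : (![a,b,c,d,e,f,g] : Fin 7 → ℂ) 3 = d := rfl
private lemma capp4 (a b c d e f g : ℂ) : (![a,b,c,d,e,f,g] : Fin 7 → ℂ) 4 = e := rfl
private lemma capp5 (a b c d e f g : ℂ) : (![a,b,c,d,e,f,g] : Fin 7 → ℂ) 5 = f := rfl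
private lemma capp6 (a b c d e f g : ℂ) : (![a,b,c,d,e,f,g] : Fin 7 → ℂ) 6 = g := rfl

private lemma pm_one {x : ℂ} (h : x ^ 2 = 1) : x = 1 ∨ x = -1 := by
  have h' : (x - 1) * (x + 1) = 0 := by linear_combination h
  rcases mul_eq_zero.mp h' with h'' | h''
  · exact Or.inl (sub_eq_zero.mp h'')
  · exact Or.inr (eq_neg_of_add_eq_zero_left h'')

private lemma sq_cases {x y : ℂ} (h : x ^ 2 = y ^ 2) : x = y ∨ x = -y := by
  have h' : (x - y) * (x + y) = 0 := by linear_combination h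
  rcases mul_eq_zero.mp h' with h'' | h''
  · exact Or.inl (sub_eq_zero.mp h'')
  · exact Or.inr (eq_neg_of_add_eq_zero_left h'')

private lemma sign_ne_zero {x : ℂ} (h : x ^ 2 = 1) : x ≠ 0 := by
  intro h'; rw [h'] at h; norm_num at h

private lemma exists_sqrt (c : ℂ) : ∃ r : ℂ, r ^ 2 = c :=
  IsAlgClosed.exists_pow_nat_eq c (n := 2) (by norm_num)

private lemma sign_of {b x : ℂ} (h : x ^ 2 = b ^ 2) : ∃ ε : ℂ, ε ^ 2 = 1 ∧ x = ε * b := by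
  by_cases hb : b = 0
  · subst hb
    refine ⟨1, by norm_num, ?_⟩
    have : x = 0 := by
      have : x ^ 2 = 0 := by rw [h]; ring
      exact pow_eq_zero_iff (by norm_num) |>.mp this
    rw [this]; ring
  · refine ⟨x / b, ?_, ?_⟩
    · field_simp [hb]; exact h
    · field_simp [hb]

/-! ### Square-root lifting along paths -/

private lemma prod_div_telescope (f : ℕ → ℂ) (hf : ∀ i, f i ≠ 0) :
    ∀ N : ℕ, (∏ i ∈ Finset.range N, f (i + 1) / f i) = f N / f 0 := by
  intro N
  induction N with
  | zero => simp [div_self (hf 0)]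
  | succ n ih =>
    rw [Finset.prod_range_succ, ih, div_mul_div_comm, mul_comm (f 0) (f n)]
    exact mul_div_mul_left _ _ (hf n)

private lemma sqrt_lift (γ : ℝ → ℂ) (hγ : ContinuousOn γ (Set.Icc 0 1))
    (hne : ∀ t ∈ Set.Icc (0:ℝ) 1, γ t ≠ 0) (x : ℂ) (hx : x ^ 2 = γ 0) :
    ∃ δ : ℝ → ℂ, ContinuousOn δ (Set.Icc 0 1) ∧ δ 0 = x ∧
      ∀ t ∈ Set.Icc (0:ℝ) 1, δ t ^ 2 = γ t := by
  have h01 : (0:ℝ) ∈ Set.Icc (0:ℝ) 1 := by constructor <;> norm_num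
  obtain ⟨t₀, ht₀, hmin⟩ := isCompact_Icc.exists_isMinOn ⟨0, h01⟩ hγ.norm
  set ε₀ : ℝ := ‖γ t₀‖ with hε₀def
  have hε₀ : 0 < ε₀ := norm_pos_iff.mpr (hne t₀ ht₀)
  have huc := isCompact_Icc.uniformContinuousOn_of_continuous hγ
  rw [Metric.uniformContinuousOn_iff] at huc
  obtain ⟨η, hηpos, H⟩ := huc ε₀ hε₀
  obtain ⟨n, hn⟩ := exists_nat_one_div_lt hηpos
  set N : ℕ := n + 1 with hNdef
  have hN0 : (0:ℝ) < N := by positivity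
  have hNη : 1 / (N:ℝ) < η := by exact_mod_cast hn
  set c : ℝ → ℕ → ℝ := fun t i => min t ((i:ℝ) / N) with hcdef
  have hcmem : ∀ t ∈ Set.Icc (0:ℝ) 1, ∀ i : ℕ, c t i ∈ Set.Icc (0:ℝ) 1 := by
    intro t ht i
    exact ⟨le_min ht.1 (by positivity), min_le_of_left_le ht.2⟩
  have hcdist : ∀ (t : ℝ) (i : ℕ), dist (c t (i+1)) (c t i) < η := by
    intro t i
    have h1 : c t i ≤ c t (i+1) := by
      apply min_le_min le_rfl
      gcongr
      push_cast; linarith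
    have h2 : c t (i+1) ≤ c t i + 1 / N := by
      have : ((i+1:ℕ):ℝ)/N = (i:ℝ)/N + 1/N := by push_cast; ring
      rcases le_total t ((i:ℝ)/N) with h | h
      · simp only [hcdef]
        rw [min_eq_left h, min_eq_left (by linarith [one_div_pos.mpr hN0])]
        linarith [one_div_pos.mpr hN0]
      · simp only [hcdef]
        rw [min_eq_right h, this]
        exact min_le_right _ _
    rw [Real.dist_eq]
    have habs : |c t (i+1) - c t i| ≤ 1/(N:ℝ) := abs_sub_le_iff.mpr ⟨by linarith, by linarith⟩
    linarith
  set r : ℕ → ℝ → ℂ := fun i t => γ (c t (i+1)) / γ (c t i) with hrdef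
  have hrne : ∀ t ∈ Set.Icc (0:ℝ) 1, ∀ i, r i t ≠ 0 := fun t ht i =>
    div_ne_zero (hne _ (hcmem t ht (i+1))) (hne _ (hcmem t ht i))
  have hrkey : ∀ t ∈ Set.Icc (0:ℝ) 1, ∀ i, ‖r i t - 1‖ < 1 := by
    intro t ht i
    have hu := hcmem t ht (i+1)
    have hv := hcmem t ht i
    have hdist : dist (γ (c t (i+1))) (γ (c t i)) < ε₀ := H _ hu _ hv (hcdist t i)
    have hγv : ε₀ ≤ ‖γ (c t i)‖ := hmin hv
    have hne' : γ (c t i) ≠ 0 := hne _ hv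
    have : r i t - 1 = (γ (c t (i+1)) - γ (c t i)) / γ (c t i) := by
      simp only [hrdef]; rw [sub_div, div_self hne']
    rw [this, norm_div, div_lt_one (norm_pos_iff.mpr hne')]
    calc ‖γ (c t (i+1)) - γ (c t i)‖ = dist (γ (c t (i+1))) (γ (c t i)) := by
          rw [dist_eq_norm]
      _ < ε₀ := hdist
      _ ≤ ‖γ (c t i)‖ := hγv
  have hslit : ∀ t ∈ Set.Icc (0:ℝ) 1, ∀ i, r i t ∈ Complex.slitPlane := by
    intro t ht i
    have := Complex.mem_slitPlane_of_norm_lt_one (hrkey t ht i)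
    simpa using this
  refine ⟨fun t => x * Complex.exp ((∑ i ∈ Finset.range N, Complex.log (r i t)) / 2),
    ?_, ?_, ?_⟩
  · apply continuousOn_const.mul
    apply Complex.continuous_exp.comp_continuousOn
    apply ContinuousOn.div_const
    apply continuousOn_finset_sum
    intro i _
    intro t ht
    have hct : ∀ j : ℕ, ContinuousOn (fun s => γ (c s j)) (Set.Icc 0 1) := by
      intro j
      apply hγ.comp ((continuous_id.min continuous_const).continuousOn)
      intro s hs; exact hcmem s hs j
    have hr : ContinuousWithinAt (r i) (Set.Icc 0 1) t := by
      apply ContinuousWithinAt.div ((hct (i+1)) t ht) ((hct i) t ht)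
      exact hne _ (hcmem t ht i)
    exact hr.clog (hslit t ht i)
  · have hc0 : ∀ i : ℕ, c 0 i = 0 := fun i => min_eq_left (by positivity)
    have : ∀ i, r i 0 = 1 := by
      intro i; simp only [hrdef, hc0]
      exact div_self (hne 0 h01)
    simp [this]
  · intro t ht
    have hsq : (x * Complex.exp ((∑ i ∈ Finset.range N, Complex.log (r i t)) / 2)) ^ 2
        = x ^ 2 * Complex.exp (∑ i ∈ Finset.range N, Complex.log (r i t)) := by
      rw [mul_pow, sq (Complex.exp _), ← Complex.exp_add]
      congr 2
      ring
    rw [hsq, Complex.exp_sum]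
    have : ∀ i ∈ Finset.range N, Complex.exp (Complex.log (r i t)) = r i t := by
      intro i _; exact Complex.exp_log (hrne t ht i)
    rw [Finset.prod_congr rfl this]
    have htel : (∏ i ∈ Finset.range N, r i t) = γ (c t N) / γ (c t 0) :=
      prod_div_telescope (fun i => γ (c t i)) (fun i => hne _ (hcmem t ht i)) N
    have hcN : c t N = t := min_eq_left (by
      rw [div_self (ne_of_gt hN0)]; exact ht.2)
    have hc0 : c t 0 = 0 := by
      simp only [hcdef]; push_cast; rw [zero_div]; exact min_eq_right ht.1
    rw [htel, hcN, hc0, hx]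
    rw [mul_comm]
    exact div_mul_cancel₀ _ (hne 0 h01)

/-! ### Membership and path plumbing -/

private def Eqs (v : Fin 7 → ℂ) : Prop :=
  v 0 ^ 2 + v 1 ^ 2 - v 5 ^ 2 = 0 ∧ v 1 ^ 2 + v 2 ^ 2 - v 3 ^ 2 = 0 ∧
    v 2 ^ 2 + v 0 ^ 2 - v 4 ^ 2 = 0 ∧ v 0 ^ 2 + v 3 ^ 2 - v 6 ^ 2 = 0

private lemma mem_upsilonC {v : Fin 7 → ℂ} (hv : v ≠ 0) (he : Eqs v) :
    Projectivization.mk ℂ v hv ∈ UpsilonC :=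
  ⟨v, hv, rfl, he.1, he.2.1, he.2.2.1, he.2.2.2⟩

private lemma joinedIn_of (v : ℝ → (Fin 7 → ℂ))
    (hc : ContinuousOn v (Set.Icc 0 1))
    (h0 : ∀ t ∈ Set.Icc (0:ℝ) 1, v t ≠ 0)
    (heq : ∀ t ∈ Set.Icc (0:ℝ) 1, Eqs (v t))
    (hv0 : v 0 ≠ 0) (hv1 : v 1 ≠ 0) :
    JoinedIn UpsilonC (Projectivization.mk ℂ (v 0) hv0)
      (Projectivization.mk ℂ (v 1) hv1) := by
  have hmem : ∀ s : unitInterval, ((s : ℝ)) ∈ Set.Icc (0:ℝ) 1 := fun s => ⟨s.2.1, s.2.2⟩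
  have hg : Continuous (fun s : unitInterval =>
      (⟨v s, h0 s (hmem s)⟩ : {w : Fin 7 → ℂ // w ≠ 0})) := by
    apply Continuous.subtype_mk
    exact hc.comp_continuous continuous_subtype_val hmem
  have hf : Continuous (fun s : unitInterval =>
      Projectivization.mk ℂ (v s) (h0 s (hmem s))) := by
    show Continuous (fun s : unitInterval =>
      Quotient.mk'' (⟨v s, h0 s (hmem s)⟩ : {w : Fin 7 → ℂ // w ≠ 0}))
    exact continuous_quotient_mk'.comp hg
  refine ⟨⟨⟨fun s => Projectivization.mk ℂ (v s) (h0 s (hmem s)), hf⟩, rfl, rfl⟩, ?_⟩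
  intro s
  exact mem_upsilonC _ (heq s (hmem s))

private lemma mk_eq_of_eq {v w : Fin 7 → ℂ} (hv : v ≠ 0) (hw : w ≠ 0) (h : v = w) :
    Projectivization.mk ℂ v hv = Projectivization.mk ℂ w hw := by
  subst h; rfl

private lemma mk_eq_of_smul {v w : Fin 7 → ℂ} (hv : v ≠ 0) (hw : w ≠ 0) (a : ℂ) (ha : a ≠ 0)
    (h : v = a • w) : Projectivization.mk ℂ v hv = Projectivization.mk ℂ w hw :=
  (Projectivization.mk_eq_mk_iff ℂ _ _ _ _).mpr ⟨Units.mk0 a ha, by rw [h]; rfl⟩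


/-! ### Conic curves inside `Υ` and the network of special points -/

private lemma vec7_eq {a0 a1 a2 a3 a4 a5 a6 b0 b1 b2 b3 b4 b5 b6 : ℂ}
    (h0 : a0 = b0) (h1 : a1 = b1) (h2 : a2 = b2) (h3 : a3 = b3) (h4 : a4 = b4)
    (h5 : a5 = b5) (h6 : a6 = b6) :
    (![a0,a1,a2,a3,a4,a5,a6] : Fin 7 → ℂ) = ![b0,b1,b2,b3,b4,b5,b6] := by
  funext i
  fin_cases i
  · exact h0
  · exact h1
  · exact h2
  · exact h3
  · exact h4
  · exact h5
  · exact h6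

private lemma smul_vec7 (a b0 b1 b2 b3 b4 b5 b6 : ℂ) :
    a • (![b0,b1,b2,b3,b4,b5,b6] : Fin 7 → ℂ) = ![a*b0,a*b1,a*b2,a*b3,a*b4,a*b5,a*b6] := by
  funext i
  fin_cases i <;> rfl

private lemma cont_vec7 {α : Type*} [TopologicalSpace α] {f0 f1 f2 f3 f4 f5 f6 : α → ℂ}
    (h0 : Continuous f0) (h1 : Continuous f1) (h2 : Continuous f2) (h3 : Continuous f3)
    (h4 : Continuous f4) (h5 : Continuous f5) (h6 : Continuous f6) :
    Continuous (fun x => (![f0 x, f1 x, f2 x, f3 x, f4 x, f5 x, f6 x] : Fin 7 → ℂ)) := by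
  apply continuous_pi
  intro i
  fin_cases i
  · exact h0
  · exact h1
  · exact h2
  · exact h3
  · exact h4
  · exact h5
  · exact h6

private lemma contOn_vec7 {f0 f1 f2 f3 f4 f5 f6 : ℝ → ℂ} {s : Set ℝ}
    (h0 : ContinuousOn f0 s) (h1 : ContinuousOn f1 s) (h2 : ContinuousOn f2 s)
    (h3 : ContinuousOn f3 s) (h4 : ContinuousOn f4 s) (h5 : ContinuousOn f5 s)
    (h6 : ContinuousOn f6 s) :
    ContinuousOn (fun x => (![f0 x, f1 x, f2 x, f3 x, f4 x, f5 x, f6 x] : Fin 7 → ℂ)) s := by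
  apply continuousOn_pi.mpr
  intro i
  fin_cases i
  · exact h0
  · exact h1
  · exact h2
  · exact h3
  · exact h4
  · exact h5
  · exact h6


private def vecC (ε δ ζ τ s u : ℂ) : Fin 7 → ℂ :=
  ![s^2-u^2, 2*s*u, 0, ε*(2*s*u), δ*(s^2-u^2), ζ*(s^2+u^2), τ*(s^2+u^2)]

private def vecB (ε δ ζ τ s u : ℂ) : Fin 7 → ℂ :=
  ![s^2-u^2, 0, 2*s*u, ε*(2*s*u), δ*(s^2+u^2), ζ*(s^2-u^2), τ*(s^2+u^2)]

private def vecA (ε δ ζ τ s u : ℂ) : Fin 7 → ℂ :=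
  ![0, s^2-u^2, 2*s*u, ε*(s^2+u^2), δ*(2*s*u), ζ*(s^2-u^2), τ*(s^2+u^2)]

private lemma su_ne {s u : ℂ} (e0 : s^2 - u^2 = 0) (h5 : s^2 + u^2 = 0) :
    s = 0 ∧ u = 0 := by
  constructor
  · have : s^2 = 0 := by linear_combination (e0 + h5) / 2
    exact pow_eq_zero_iff (by norm_num) |>.mp this
  · have : u^2 = 0 := by linear_combination (h5 - e0) / 2
    exact pow_eq_zero_iff (by norm_num) |>.mp this

private lemma vecC_ne {ε δ ζ τ s u : ℂ} (hζ : ζ^2 = 1) (h : ¬(s = 0 ∧ u = 0)) :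
    vecC ε δ ζ τ s u ≠ 0 := by
  intro h0
  have e0 : s^2 - u^2 = 0 := congrFun h0 0
  have e5 : ζ * (s^2 + u^2) = 0 := congrFun h0 5
  have h5 : s^2 + u^2 = 0 := by
    rcases mul_eq_zero.mp e5 with h' | h'
    · exact absurd h' (sign_ne_zero hζ)
    · exact h'
  exact h (su_ne e0 h5)

private lemma vecB_ne {ε δ ζ τ s u : ℂ} (hζ : ζ^2 = 1) (hτ : τ^2 = 1)
    (h : ¬(s = 0 ∧ u = 0)) : vecB ε δ ζ τ s u ≠ 0 := by
  intro h0
  have e5 : ζ * (s^2 - u^2) = 0 := congrFun h0 5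
  have e6 : τ * (s^2 + u^2) = 0 := congrFun h0 6
  have h0' : s^2 - u^2 = 0 := by
    rcases mul_eq_zero.mp e5 with h' | h'
    · exact absurd h' (sign_ne_zero hζ)
    · exact h'
  have h5 : s^2 + u^2 = 0 := by
    rcases mul_eq_zero.mp e6 with h' | h'
    · exact absurd h' (sign_ne_zero hτ)
    · exact h'
  exact h (su_ne h0' h5)

private lemma vecA_ne {ε δ ζ τ s u : ℂ} (hζ : ζ^2 = 1) (hε : ε^2 = 1)
    (h : ¬(s = 0 ∧ u = 0)) : vecA ε δ ζ τ s u ≠ 0 := by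
  intro h0
  have e5 : ζ * (s^2 - u^2) = 0 := congrFun h0 5
  have e3 : ε * (s^2 + u^2) = 0 := congrFun h0 3
  have h0' : s^2 - u^2 = 0 := by
    rcases mul_eq_zero.mp e5 with h' | h'
    · exact absurd h' (sign_ne_zero hζ)
    · exact h'
  have h5 : s^2 + u^2 = 0 := by
    rcases mul_eq_zero.mp e3 with h' | h'
    · exact absurd h' (sign_ne_zero hε)
    · exact h'
  exact h (su_ne h0' h5)

private lemma eqs_vecC {ε δ ζ τ : ℂ} (hε : ε^2 = 1) (hδ : δ^2 = 1) (hζ : ζ^2 = 1)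
    (hτ : τ^2 = 1) (s u : ℂ) : Eqs (vecC ε δ ζ τ s u) := by
  refine ⟨?_, ?_, ?_, ?_⟩
  · show (s^2-u^2)^2 + (2*s*u)^2 - (ζ*(s^2+u^2))^2 = 0
    linear_combination (-(s^2+u^2)^2) * hζ
  · show (2*s*u)^2 + 0^2 - (ε*(2*s*u))^2 = 0
    linear_combination (-(2*s*u)^2) * hε
  · show 0^2 + (s^2-u^2)^2 - (δ*(s^2-u^2))^2 = 0
    linear_combination (-(s^2-u^2)^2) * hδ
  · show (s^2-u^2)^2 + (ε*(2*s*u))^2 - (τ*(s^2+u^2))^2 = 0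
    linear_combination ((2*s*u)^2) * hε - ((s^2+u^2)^2) * hτ

private lemma eqs_vecB {ε δ ζ τ : ℂ} (hε : ε^2 = 1) (hδ : δ^2 = 1) (hζ : ζ^2 = 1)
    (hτ : τ^2 = 1) (s u : ℂ) : Eqs (vecB ε δ ζ τ s u) := by
  refine ⟨?_, ?_, ?_, ?_⟩
  · show (s^2-u^2)^2 + 0^2 - (ζ*(s^2-u^2))^2 = 0
    linear_combination (-(s^2-u^2)^2) * hζ
  · show 0^2 + (2*s*u)^2 - (ε*(2*s*u))^2 = 0
    linear_combination (-(2*s*u)^2) * hε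
  · show (2*s*u)^2 + (s^2-u^2)^2 - (δ*(s^2+u^2))^2 = 0
    linear_combination (-(s^2+u^2)^2) * hδ
  · show (s^2-u^2)^2 + (ε*(2*s*u))^2 - (τ*(s^2+u^2))^2 = 0
    linear_combination ((2*s*u)^2) * hε - ((s^2+u^2)^2) * hτ

private lemma eqs_vecA {ε δ ζ τ : ℂ} (hε : ε^2 = 1) (hδ : δ^2 = 1) (hζ : ζ^2 = 1)
    (hτ : τ^2 = 1) (s u : ℂ) : Eqs (vecA ε δ ζ τ s u) := by
  refine ⟨?_, ?_, ?_, ?_⟩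
  · show 0^2 + (s^2-u^2)^2 - (ζ*(s^2-u^2))^2 = 0
    linear_combination (-(s^2-u^2)^2) * hζ
  · show (s^2-u^2)^2 + (2*s*u)^2 - (ε*(s^2+u^2))^2 = 0
    linear_combination (-(s^2+u^2)^2) * hε
  · show (2*s*u)^2 + 0^2 - (δ*(2*s*u))^2 = 0
    linear_combination (-(2*s*u)^2) * hδ
  · show 0^2 + (ε*(s^2+u^2))^2 - (τ*(s^2+u^2))^2 = 0
    linear_combination ((s^2+u^2)^2) * hε - ((s^2+u^2)^2) * hτ

private lemma one_lt_rank_CC : 1 < Module.rank ℝ (ℂ × ℂ) := by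
  rw [rank_prod', Complex.rank_real_complex]
  exact lt_of_lt_of_le Cardinal.one_lt_two le_self_add

private lemma one_lt_rank_C : 1 < Module.rank ℝ ℂ :=
  Complex.rank_real_complex ▸ Nat.one_lt_ofNat

/-- Generic joining lemma along one of the three conic families. -/
private lemma joined_conic (F : ℂ → ℂ → (Fin 7 → ℂ))
    (hFc : Continuous (fun p : ℂ × ℂ => F p.1 p.2))
    (hFne : ∀ s u : ℂ, ¬(s = 0 ∧ u = 0) → F s u ≠ 0)
    (hFeq : ∀ s u : ℂ, Eqs (F s u))
    (s u s' u' : ℂ) (h : ¬(s = 0 ∧ u = 0)) (h' : ¬(s' = 0 ∧ u' = 0)) :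
    JoinedIn UpsilonC (Projectivization.mk ℂ (F s u) (hFne s u h))
      (Projectivization.mk ℂ (F s' u') (hFne s' u' h')) := by
  have hpc : IsPathConnected ({0}ᶜ : Set (ℂ × ℂ)) :=
    (Set.countable_singleton 0).isPathConnected_compl_of_one_lt_rank one_lt_rank_CC
  have hm1 : ((s, u) : ℂ × ℂ) ∈ ({0}ᶜ : Set (ℂ × ℂ)) := by
    simp only [Set.mem_compl_iff, Set.mem_singleton_iff, Prod.mk_eq_zero]
    exact h
  have hm2 : ((s', u') : ℂ × ℂ) ∈ ({0}ᶜ : Set (ℂ × ℂ)) := by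
    simp only [Set.mem_compl_iff, Set.mem_singleton_iff, Prod.mk_eq_zero]
    exact h'
  obtain ⟨γ, hγ⟩ := hpc.joinedIn _ hm1 _ hm2
  set d : ℝ → ℂ × ℂ := ⇑γ.extend with hddef
  have hdmem : ∀ t ∈ Set.Icc (0:ℝ) 1, ¬((d t).1 = 0 ∧ (d t).2 = 0) := by
    intro t ht
    have := hγ ⟨t, ht⟩
    rw [Set.mem_compl_iff, Set.mem_singleton_iff] at this
    rw [hddef, Path.extend_apply γ ht]
    intro hc
    exact this (Prod.ext_iff.mpr ⟨hc.1, hc.2⟩)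
  have key := joinedIn_of (fun t => F (d t).1 (d t).2)
    ((hFc.comp γ.continuous_extend).continuousOn)
    (fun t ht => hFne _ _ (hdmem t ht))
    (fun t _ => hFeq _ _)
    (hFne _ _ (hdmem 0 ⟨le_refl 0, zero_le_one⟩))
    (hFne _ _ (hdmem 1 ⟨zero_le_one, le_refl 1⟩))
  have e0 : F (d 0).1 (d 0).2 = F s u := by
    rw [hddef, Path.extend_zero]
  have e1 : F (d 1).1 (d 1).2 = F s' u' := by
    rw [hddef, Path.extend_one]
  rw [mk_eq_of_eq _ (hFne s u h) e0, mk_eq_of_eq _ (hFne s' u' h') e1] at key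
  exact key

private lemma cont_vecC (ε δ ζ τ : ℂ) : Continuous (fun p : ℂ × ℂ => vecC ε δ ζ τ p.1 p.2) := by
  show Continuous (fun p : ℂ × ℂ => (![p.1^2-p.2^2, 2*p.1*p.2, 0, ε*(2*p.1*p.2), δ*(p.1^2-p.2^2), ζ*(p.1^2+p.2^2), τ*(p.1^2+p.2^2)] : Fin 7 → ℂ))
  exact cont_vec7 (by fun_prop) (by fun_prop) (by fun_prop) (by fun_prop) (by fun_prop)
    (by fun_prop) (by fun_prop)

private lemma cont_vecB (ε δ ζ τ : ℂ) : Continuous (fun p : ℂ × ℂ => vecB ε δ ζ τ p.1 p.2) := by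
  show Continuous (fun p : ℂ × ℂ => (![p.1^2-p.2^2, 0, 2*p.1*p.2, ε*(2*p.1*p.2), δ*(p.1^2+p.2^2), ζ*(p.1^2-p.2^2), τ*(p.1^2+p.2^2)] : Fin 7 → ℂ))
  exact cont_vec7 (by fun_prop) (by fun_prop) (by fun_prop) (by fun_prop) (by fun_prop)
    (by fun_prop) (by fun_prop)

private lemma cont_vecA (ε δ ζ τ : ℂ) : Continuous (fun p : ℂ × ℂ => vecA ε δ ζ τ p.1 p.2) := by
  show Continuous (fun p : ℂ × ℂ => (![0, p.1^2-p.2^2, 2*p.1*p.2, ε*(p.1^2+p.2^2), δ*(2*p.1*p.2), ζ*(p.1^2-p.2^2), τ*(p.1^2+p.2^2)] : Fin 7 → ℂ))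
  exact cont_vec7 (by fun_prop) (by fun_prop) (by fun_prop) (by fun_prop) (by fun_prop)
    (by fun_prop) (by fun_prop)

/-! ### Special points -/

private def Qp (δ ζ τ : ℂ) : Fin 7 → ℂ := ![1, 0, 0, 0, δ, ζ, τ]
private def Rp (ε ζ τ : ℂ) : Fin 7 → ℂ := ![0, 1, 0, ε, 0, ζ, τ]

private lemma Qp_ne (δ ζ τ : ℂ) : Qp δ ζ τ ≠ 0 := by
  intro h
  have : (1:ℂ) = 0 := congrFun h 0
  norm_num at this

private lemma Rp_ne (ε ζ τ : ℂ) : Rp ε ζ τ ≠ 0 := by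
  intro h
  have : (1:ℂ) = 0 := congrFun h 1
  norm_num at this

private lemma eqs_Qp {δ ζ τ : ℂ} (hδ : δ^2 = 1) (hζ : ζ^2 = 1) (hτ : τ^2 = 1) :
    Eqs (Qp δ ζ τ) := by
  refine ⟨?_, ?_, ?_, ?_⟩
  · show (1:ℂ)^2 + 0^2 - ζ^2 = 0; rw [hζ]; ring
  · show (0:ℂ)^2 + 0^2 - 0^2 = 0; ring
  · show (0:ℂ)^2 + 1^2 - δ^2 = 0; rw [hδ]; ring
  · show (1:ℂ)^2 + 0^2 - τ^2 = 0; rw [hτ]; ring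

private lemma eqs_Rp {ε ζ τ : ℂ} (hε : ε^2 = 1) (hζ : ζ^2 = 1) (hτ : τ^2 = 1) :
    Eqs (Rp ε ζ τ) := by
  refine ⟨?_, ?_, ?_, ?_⟩
  · show (0:ℂ)^2 + 1^2 - ζ^2 = 0; rw [hζ]; ring
  · show (1:ℂ)^2 + 0^2 - ε^2 = 0; rw [hε]; ring
  · show (0:ℂ)^2 + 0^2 - 0^2 = 0; ring
  · show (0:ℂ)^2 + ε^2 - τ^2 = 0; rw [hε, hτ]; ring

private def mkQ (δ ζ τ : ℂ) : ℙ ℂ (Fin 7 → ℂ) := Projectivization.mk ℂ (Qp δ ζ τ) (Qp_ne δ ζ τ)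
private def mkR (ε ζ τ : ℂ) : ℙ ℂ (Fin 7 → ℂ) := Projectivization.mk ℂ (Rp ε ζ τ) (Rp_ne ε ζ τ)

private lemma h10 : ¬((1:ℂ) = 0 ∧ (0:ℂ) = 0) := by norm_num
private lemma h01 : ¬((0:ℂ) = 0 ∧ (1:ℂ) = 0) := by norm_num
private lemma h11 : ¬((1:ℂ) = 0 ∧ (1:ℂ) = 0) := by norm_num

/- endpoint identifications -/
private lemma vecC10 (ε δ ζ τ : ℂ) : vecC ε δ ζ τ 1 0 = Qp δ ζ τ :=
  vec7_eq (by ring) (by ring) (by ring) (by ring) (by ring) (by ring) (by ring)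

private lemma vecC01 (ε δ ζ τ : ℂ) : vecC ε δ ζ τ 0 1 = (-1 : ℂ) • Qp δ (-ζ) (-τ) := by
  rw [Qp, smul_vec7]
  exact vec7_eq (by ring) (by ring) (by ring) (by ring) (by ring) (by ring) (by ring)

private lemma vecC11 (ε δ ζ τ : ℂ) : vecC ε δ ζ τ 1 1 = (2 : ℂ) • Rp ε ζ τ := by
  rw [Rp, smul_vec7]
  exact vec7_eq (by ring) (by ring) (by ring) (by ring) (by ring) (by ring) (by ring)

private lemma vecB10 (ε δ ζ τ : ℂ) : vecB ε δ ζ τ 1 0 = Qp δ ζ τ :=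
  vec7_eq (by ring) (by ring) (by ring) (by ring) (by ring) (by ring) (by ring)

private lemma vecB01 (ε δ ζ τ : ℂ) : vecB ε δ ζ τ 0 1 = (-1 : ℂ) • Qp (-δ) ζ (-τ) := by
  rw [Qp, smul_vec7]
  exact vec7_eq (by ring) (by ring) (by ring) (by ring) (by ring) (by ring) (by ring)

private lemma vecA10 (ε δ ζ τ : ℂ) : vecA ε δ ζ τ 1 0 = Rp ε ζ τ :=
  vec7_eq (by ring) (by ring) (by ring) (by ring) (by ring) (by ring) (by ring)

private lemma vecA01 (ε δ ζ τ : ℂ) : vecA ε δ ζ τ 0 1 = (-1 : ℂ) • Rp (-ε) ζ (-τ) := by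
  rw [Rp, smul_vec7]
  exact vec7_eq (by ring) (by ring) (by ring) (by ring) (by ring) (by ring) (by ring)

/-! ### Moves between special points -/

private lemma moveC {δ ζ τ : ℂ} (hδ : δ^2=1) (hζ : ζ^2=1) (hτ : τ^2=1) :
    JoinedIn UpsilonC (mkQ δ ζ τ) (mkQ δ (-ζ) (-τ)) := by
  have key := joined_conic (vecC 1 δ ζ τ) (cont_vecC 1 δ ζ τ)
    (fun s u h => vecC_ne hζ h) (fun s u => eqs_vecC (by norm_num) hδ hζ hτ s u)
    1 0 0 1 h10 h01
  rw [mk_eq_of_eq _ (Qp_ne δ ζ τ) (vecC10 1 δ ζ τ),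
    mk_eq_of_smul _ (Qp_ne δ (-ζ) (-τ)) (-1) (by norm_num) (vecC01 1 δ ζ τ)] at key
  exact key

private lemma moveQR {ε δ ζ τ : ℂ} (hε : ε^2=1) (hδ : δ^2=1) (hζ : ζ^2=1) (hτ : τ^2=1) :
    JoinedIn UpsilonC (mkQ δ ζ τ) (mkR ε ζ τ) := by
  have key := joined_conic (vecC ε δ ζ τ) (cont_vecC ε δ ζ τ)
    (fun s u h => vecC_ne hζ h) (fun s u => eqs_vecC hε hδ hζ hτ s u)
    1 0 1 1 h10 h11
  rw [mk_eq_of_eq _ (Qp_ne δ ζ τ) (vecC10 ε δ ζ τ),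
    mk_eq_of_smul _ (Rp_ne ε ζ τ) (2) (by norm_num) (vecC11 ε δ ζ τ)] at key
  exact key

private lemma moveB {δ ζ τ : ℂ} (hδ : δ^2=1) (hζ : ζ^2=1) (hτ : τ^2=1) :
    JoinedIn UpsilonC (mkQ δ ζ τ) (mkQ (-δ) ζ (-τ)) := by
  have key := joined_conic (vecB 1 δ ζ τ) (cont_vecB 1 δ ζ τ)
    (fun s u h => vecB_ne hζ hτ h) (fun s u => eqs_vecB (by norm_num) hδ hζ hτ s u)
    1 0 0 1 h10 h01
  rw [mk_eq_of_eq _ (Qp_ne δ ζ τ) (vecB10 1 δ ζ τ),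
    mk_eq_of_smul _ (Qp_ne (-δ) ζ (-τ)) (-1) (by norm_num) (vecB01 1 δ ζ τ)] at key
  exact key

private lemma moveA {ε ζ τ : ℂ} (hε : ε^2=1) (hζ : ζ^2=1) (hτ : τ^2=1) :
    JoinedIn UpsilonC (mkR ε ζ τ) (mkR (-ε) ζ (-τ)) := by
  have key := joined_conic (vecA ε 1 ζ τ) (cont_vecA ε 1 ζ τ)
    (fun s u h => vecA_ne hζ hε h) (fun s u => eqs_vecA hε (by norm_num) hζ hτ s u)
    1 0 0 1 h10 h01
  rw [mk_eq_of_eq _ (Rp_ne ε ζ τ) (vecA10 ε 1 ζ τ),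
    mk_eq_of_smul _ (Rp_ne (-ε) ζ (-τ)) (-1) (by norm_num) (vecA01 ε 1 ζ τ)] at key
  exact key

/-- τ-flip via the R detour. -/
private lemma moveT {δ ζ τ : ℂ} (hδ : δ^2=1) (hζ : ζ^2=1) (hτ : τ^2=1) :
    JoinedIn UpsilonC (mkQ δ ζ τ) (mkQ δ ζ (-τ)) := by
  have hnτ : (-τ)^2 = 1 := by rw [neg_pow]; simpa using hτ
  have j1 : JoinedIn UpsilonC (mkQ δ ζ τ) (mkR 1 ζ τ) := moveQR (by norm_num) hδ hζ hτ
  have j2 : JoinedIn UpsilonC (mkR 1 ζ τ) (mkR (-1) ζ (-τ)) := moveA (by norm_num) hζ hτ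
  have j3 : JoinedIn UpsilonC (mkQ δ ζ (-τ)) (mkR (-1) ζ (-τ)) := moveQR (by norm_num) hδ hζ hnτ
  exact (j1.trans j2).trans j3.symm


/-! ### All special points are joined to the base point -/

private lemma mkQ_mem {δ ζ τ : ℂ} (hδ : δ^2=1) (hζ : ζ^2=1) (hτ : τ^2=1) :
    mkQ δ ζ τ ∈ UpsilonC := mem_upsilonC _ (eqs_Qp hδ hζ hτ)

private lemma joined_QQ {δ ζ τ : ℂ} (hδ : δ^2=1) (hζ : ζ^2=1) (hτ : τ^2=1) :
    JoinedIn UpsilonC (mkQ δ ζ τ) (mkQ 1 1 1) := by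
  have n1 : ((1:ℂ))^2 = 1 := by norm_num
  have nm1 : ((-1:ℂ))^2 = 1 := by norm_num
  rcases pm_one hδ with rfl | rfl <;> rcases pm_one hζ with rfl | rfl <;>
    rcases pm_one hτ with rfl | rfl
  · exact JoinedIn.refl (mkQ_mem n1 n1 n1)
  · exact (moveT n1 n1 n1).symm
  · -- (1, -1, 1)
    have j1 := moveT n1 n1 n1
    have j2 := moveC (δ := 1) (ζ := 1) (τ := -1) n1 n1 nm1
    simp only [neg_neg] at j2
    exact (j1.trans j2).symm
  · exact (moveC n1 n1 n1).symm
  · -- (-1, 1, 1)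
    have j1 := moveT n1 n1 n1
    have j2 := moveB (δ := 1) (ζ := 1) (τ := -1) n1 n1 nm1
    simp only [neg_neg] at j2
    exact (j1.trans j2).symm
  · exact (moveB n1 n1 n1).symm
  · -- (-1, -1, 1)
    have j1 := moveB n1 n1 n1
    have j2 := moveC (δ := -1) (ζ := 1) (τ := -1) nm1 n1 nm1
    simp only [neg_neg] at j2
    exact (j1.trans j2).symm
  · -- (-1, -1, -1)
    have j1 := moveB n1 n1 n1
    have j2 := moveC (δ := -1) (ζ := 1) (τ := -1) nm1 n1 nm1
    simp only [neg_neg] at j2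
    have j3 := moveT (δ := -1) (ζ := -1) (τ := 1) nm1 nm1 n1
    exact ((j1.trans j2).trans j3).symm

private lemma joined_RQ {ε ζ τ : ℂ} (hε : ε^2=1) (hζ : ζ^2=1) (hτ : τ^2=1) :
    JoinedIn UpsilonC (mkR ε ζ τ) (mkQ 1 1 1) := by
  have n1 : ((1:ℂ))^2 = 1 := by norm_num
  exact (moveQR hε n1 hζ hτ).symm.trans (joined_QQ n1 hζ hτ)

/-! ### Capture lemmas: points with a vanishing first coordinate lie on conics -/

private lemma eta_vec7 (v : Fin 7 → ℂ) : v = ![v 0, v 1, v 2, v 3, v 4, v 5, v 6] := by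
  funext i; fin_cases i <;> rfl

private lemma cap_C (v : Fin 7 → ℂ) (hv : v ≠ 0) (he : Eqs v) (hC : v 2 = 0) :
    ∃ (ε δ τ s u : ℂ), ε^2 = 1 ∧ δ^2 = 1 ∧ τ^2 = 1 ∧ ¬(s = 0 ∧ u = 0) ∧
      v = vecC ε δ 1 τ s u := by
  obtain ⟨e1, e2, e3, e4⟩ := he
  have e2' : v 3^2 = v 1^2 := by linear_combination -e2 + (v 2) * hC
  have e3' : v 4^2 = v 0^2 := by linear_combination -e3 + (v 2) * hC
  have e4' : v 6^2 = v 5^2 := by linear_combination -e4 + e1 + e2'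
  obtain ⟨ε, hε, exX⟩ := sign_of e2'
  obtain ⟨δ, hδ, exY⟩ := sign_of e3'
  obtain ⟨τ, hτ, exU⟩ := sign_of e4'
  obtain ⟨s, hs⟩ := exists_sqrt ((v 5 + v 0)/2)
  obtain ⟨u₀, hu₀⟩ := exists_sqrt ((v 5 - v 0)/2)
  have hb2 : (2*s*u₀)^2 = v 1^2 := by
    have h4 : (2*s*u₀)^2 = v 5^2 - v 0^2 := by
      linear_combination (4*u₀^2) * hs + (2*(v 5 + v 0)) * hu₀
    linear_combination h4 - e1
  obtain ⟨u, hu, hsu⟩ : ∃ u : ℂ, u^2 = (v 5 - v 0)/2 ∧ 2*s*u = v 1 := by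
    rcases sq_cases hb2 with hsu | hsu
    · exact ⟨u₀, hu₀, hsu⟩
    · exact ⟨-u₀, by linear_combination hu₀, by linear_combination -hsu⟩
  have ha : s^2 - u^2 = v 0 := by rw [hs, hu]; ring
  have hz : s^2 + u^2 = v 5 := by rw [hs, hu]; ring
  refine ⟨ε, δ, τ, s, u, hε, hδ, hτ, ?_, ?_⟩
  · rintro ⟨rfl, rfl⟩
    apply hv
    have hA : v 0 = 0 := by rw [← ha]; ring
    have hZ : v 5 = 0 := by rw [← hz]; ring
    have hB : v 1 = 0 := by rw [← hsu]; ring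
    have hX : v 3 = 0 := by rw [exX, hB, mul_zero]
    have hY : v 4 = 0 := by rw [exY, hA, mul_zero]
    have hU : v 6 = 0 := by rw [exU, hZ, mul_zero]
    funext i
    fin_cases i
    · exact hA
    · exact hB
    · exact hC
    · exact hX
    · exact hY
    · exact hZ
    · exact hU
  · have hvec : vecC ε δ 1 τ s u = ![v 0, v 1, v 2, v 3, v 4, v 5, v 6] := by
      refine vec7_eq ha hsu hC.symm ?_ ?_ ?_ ?_
      · rw [hsu]; exact exX.symm
      · rw [ha]; exact exY.symm
      · rw [one_mul, hz]
      · rw [hz]; exact exU.symm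
    rw [eta_vec7 v, ← hvec]

private lemma cap_B (v : Fin 7 → ℂ) (hv : v ≠ 0) (he : Eqs v) (hB : v 1 = 0) :
    ∃ (ε ζ τ s u : ℂ), ε^2 = 1 ∧ ζ^2 = 1 ∧ τ^2 = 1 ∧ ¬(s = 0 ∧ u = 0) ∧
      v = vecB ε 1 ζ τ s u := by
  obtain ⟨e1, e2, e3, e4⟩ := he
  have e2' : v 3^2 = v 2^2 := by linear_combination -e2 + (v 1) * hB
  have e1' : v 5^2 = v 0^2 := by linear_combination -e1 + (v 1) * hB
  have e4' : v 6^2 = v 4^2 := by linear_combination -e4 + e3 + e2'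
  obtain ⟨ε, hε, exX⟩ := sign_of e2'
  obtain ⟨ζ, hζ, exZ⟩ := sign_of e1'
  obtain ⟨τ, hτ, exU⟩ := sign_of e4'
  obtain ⟨s, hs⟩ := exists_sqrt ((v 4 + v 0)/2)
  obtain ⟨u₀, hu₀⟩ := exists_sqrt ((v 4 - v 0)/2)
  have hb2 : (2*s*u₀)^2 = v 2^2 := by
    have h4 : (2*s*u₀)^2 = v 4^2 - v 0^2 := by
      linear_combination (4*u₀^2) * hs + (2*(v 4 + v 0)) * hu₀
    linear_combination h4 - e3
  obtain ⟨u, hu, hsu⟩ : ∃ u : ℂ, u^2 = (v 4 - v 0)/2 ∧ 2*s*u = v 2 := by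
    rcases sq_cases hb2 with hsu | hsu
    · exact ⟨u₀, hu₀, hsu⟩
    · exact ⟨-u₀, by linear_combination hu₀, by linear_combination -hsu⟩
  have ha : s^2 - u^2 = v 0 := by rw [hs, hu]; ring
  have hy : s^2 + u^2 = v 4 := by rw [hs, hu]; ring
  refine ⟨ε, ζ, τ, s, u, hε, hζ, hτ, ?_, ?_⟩
  · rintro ⟨rfl, rfl⟩
    apply hv
    have hA : v 0 = 0 := by rw [← ha]; ring
    have hY : v 4 = 0 := by rw [← hy]; ring
    have hCc : v 2 = 0 := by rw [← hsu]; ring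
    have hX : v 3 = 0 := by rw [exX, hCc, mul_zero]
    have hZ : v 5 = 0 := by rw [exZ, hA, mul_zero]
    have hU : v 6 = 0 := by rw [exU, hY, mul_zero]
    funext i
    fin_cases i
    · exact hA
    · exact hB
    · exact hCc
    · exact hX
    · exact hY
    · exact hZ
    · exact hU
  · have hvec : vecB ε 1 ζ τ s u = ![v 0, v 1, v 2, v 3, v 4, v 5, v 6] := by
      refine vec7_eq ha hB.symm hsu ?_ ?_ ?_ ?_
      · rw [hsu]; exact exX.symm
      · rw [one_mul, hy]
      · rw [ha]; exact exZ.symm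
      · rw [hy]; exact exU.symm
    rw [eta_vec7 v, ← hvec]

private lemma cap_A (v : Fin 7 → ℂ) (hv : v ≠ 0) (he : Eqs v) (hA : v 0 = 0) :
    ∃ (δ ζ τ s u : ℂ), δ^2 = 1 ∧ ζ^2 = 1 ∧ τ^2 = 1 ∧ ¬(s = 0 ∧ u = 0) ∧
      v = vecA 1 δ ζ τ s u := by
  obtain ⟨e1, e2, e3, e4⟩ := he
  have e3' : v 4^2 = v 2^2 := by linear_combination -e3 + (v 0) * hA
  have e1' : v 5^2 = v 1^2 := by linear_combination -e1 + (v 0) * hA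
  have e4' : v 6^2 = v 3^2 := by linear_combination -e4 + (v 0) * hA
  obtain ⟨δ, hδ, exY⟩ := sign_of e3'
  obtain ⟨ζ, hζ, exZ⟩ := sign_of e1'
  obtain ⟨τ, hτ, exU⟩ := sign_of e4'
  obtain ⟨s, hs⟩ := exists_sqrt ((v 3 + v 1)/2)
  obtain ⟨u₀, hu₀⟩ := exists_sqrt ((v 3 - v 1)/2)
  have hb2 : (2*s*u₀)^2 = v 2^2 := by
    have h4 : (2*s*u₀)^2 = v 3^2 - v 1^2 := by
      linear_combination (4*u₀^2) * hs + (2*(v 3 + v 1)) * hu₀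
    linear_combination h4 - e2
  obtain ⟨u, hu, hsu⟩ : ∃ u : ℂ, u^2 = (v 3 - v 1)/2 ∧ 2*s*u = v 2 := by
    rcases sq_cases hb2 with hsu | hsu
    · exact ⟨u₀, hu₀, hsu⟩
    · exact ⟨-u₀, by linear_combination hu₀, by linear_combination -hsu⟩
  have hb : s^2 - u^2 = v 1 := by rw [hs, hu]; ring
  have hx : s^2 + u^2 = v 3 := by rw [hs, hu]; ring
  refine ⟨δ, ζ, τ, s, u, hδ, hζ, hτ, ?_, ?_⟩
  · rintro ⟨rfl, rfl⟩
    apply hv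
    have hBb : v 1 = 0 := by rw [← hb]; ring
    have hX : v 3 = 0 := by rw [← hx]; ring
    have hCc : v 2 = 0 := by rw [← hsu]; ring
    have hY : v 4 = 0 := by rw [exY, hCc, mul_zero]
    have hZ : v 5 = 0 := by rw [exZ, hBb, mul_zero]
    have hU : v 6 = 0 := by rw [exU, hX, mul_zero]
    funext i
    fin_cases i
    · exact hA
    · exact hBb
    · exact hCc
    · exact hX
    · exact hY
    · exact hZ
    · exact hU
  · have hvec : vecA 1 δ ζ τ s u = ![v 0, v 1, v 2, v 3, v 4, v 5, v 6] := by
      refine vec7_eq hA.symm hb hsu ?_ ?_ ?_ ?_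
      · rw [one_mul, hx]
      · rw [hsu]; exact exY.symm
      · rw [hb]; exact exZ.symm
      · rw [hx]; exact exU.symm
    rw [eta_vec7 v, ← hvec]

/-! ### Joining captured points to the base point -/

private lemma joined_capC (v : Fin 7 → ℂ) (hv : v ≠ 0) (he : Eqs v) (hC : v 2 = 0) :
    JoinedIn UpsilonC (Projectivization.mk ℂ v hv) (mkQ 1 1 1) := by
  obtain ⟨ε, δ, τ, s, u, hε, hδ, hτ, hsu, hveq⟩ := cap_C v hv he hC
  have n1 : ((1:ℂ))^2 = 1 := by norm_num
  have j := joined_conic (vecC ε δ 1 τ) (cont_vecC _ _ _ _)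
    (fun s u h => vecC_ne n1 h) (fun s u => eqs_vecC hε hδ n1 hτ s u) s u 1 0 hsu h10
  rw [← mk_eq_of_eq hv _ hveq,
    mk_eq_of_eq _ (Qp_ne δ 1 τ) (vecC10 ε δ 1 τ)] at j
  exact j.trans (joined_QQ hδ n1 hτ)

private lemma joined_capB (v : Fin 7 → ℂ) (hv : v ≠ 0) (he : Eqs v) (hB : v 1 = 0) :
    JoinedIn UpsilonC (Projectivization.mk ℂ v hv) (mkQ 1 1 1) := by
  obtain ⟨ε, ζ, τ, s, u, hε, hζ, hτ, hsu, hveq⟩ := cap_B v hv he hB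
  have n1 : ((1:ℂ))^2 = 1 := by norm_num
  have j := joined_conic (vecB ε 1 ζ τ) (cont_vecB _ _ _ _)
    (fun s u h => vecB_ne hζ hτ h) (fun s u => eqs_vecB hε n1 hζ hτ s u) s u 1 0 hsu h10
  rw [← mk_eq_of_eq hv _ hveq,
    mk_eq_of_eq _ (Qp_ne 1 ζ τ) (vecB10 ε 1 ζ τ)] at j
  exact j.trans (joined_QQ n1 hζ hτ)

private lemma joined_capA (v : Fin 7 → ℂ) (hv : v ≠ 0) (he : Eqs v) (hA : v 0 = 0) :
    JoinedIn UpsilonC (Projectivization.mk ℂ v hv) (mkQ 1 1 1) := by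
  obtain ⟨δ, ζ, τ, s, u, hδ, hζ, hτ, hsu, hveq⟩ := cap_A v hv he hA
  have n1 : ((1:ℂ))^2 = 1 := by norm_num
  have j := joined_conic (vecA 1 δ ζ τ) (cont_vecA _ _ _ _)
    (fun s u h => vecA_ne hζ n1 h) (fun s u => eqs_vecA n1 hδ hζ hτ s u) s u 1 0 hsu h10
  rw [← mk_eq_of_eq hv _ hveq,
    mk_eq_of_eq _ (Rp_ne 1 ζ τ) (vecA10 1 δ ζ τ)] at j
  exact j.trans (joined_RQ n1 hζ hτ)


/-! ### Path builders -/

private lemma w_path (ρ : ℝ) :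
    ∃ w : ℝ → ℂ, ContinuousOn w (Set.Icc 0 1) ∧ w 0 = 1 ∧
      (∀ t ∈ Set.Icc (0:ℝ) 1, w t ^ 2 = 1 + (t:ℂ)^2 * (ρ:ℂ)^2) ∧ w 1 ≠ 0 := by
  have hcast : ∀ t : ℝ, ((1 + t^2*ρ^2 : ℝ) : ℂ) = 1 + (t:ℂ)^2 * (ρ:ℂ)^2 := by
    intro t; push_cast; ring
  have hne : ∀ t ∈ Set.Icc (0:ℝ) 1, (1 : ℂ) + (t:ℂ)^2 * (ρ:ℂ)^2 ≠ 0 := by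
    intro t _
    rw [← hcast t]
    exact_mod_cast (by positivity : (0:ℝ) < 1 + t^2*ρ^2).ne'
  obtain ⟨w, hwc, hw0, hwsq⟩ := sqrt_lift (fun t => 1 + (t:ℂ)^2 * (ρ:ℂ)^2)
    (by apply Continuous.continuousOn; fun_prop) hne 1 (by norm_num)
  refine ⟨w, hwc, hw0, hwsq, ?_⟩
  intro h
  have := hwsq 1 ⟨zero_le_one, le_refl 1⟩
  rw [h] at this
  exact hne 1 ⟨zero_le_one, le_refl 1⟩ (by rw [← this]; ring)

private lemma sq_path (K k : ℂ) (ρ : ℝ) (hρ : 0 < ρ) (hK : K ≠ 0)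
    (h : k = 0 ∨ ρ^2 * ‖K‖^2 < ‖k‖^2) :
    ∃ f : ℝ → ℂ, ContinuousOn f (Set.Icc 0 1) ∧ f 0 = k ∧
      (∀ t ∈ Set.Icc (0:ℝ) 1, f t ^ 2 = k ^ 2 + (t:ℂ)^2 * (ρ:ℂ)^2 * K^2) ∧ f 1 ≠ 0 := by
  rcases h with rfl | hlt
  · refine ⟨fun t => K * (ρ:ℂ) * (t:ℂ), by apply Continuous.continuousOn; fun_prop, by simp, ?_, ?_⟩
    · intro t _; push_cast; ring
    · push_cast
      intro h
      rcases mul_eq_zero.mp h with h' | h'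
      · rcases mul_eq_zero.mp h' with h'' | h''
        · exact hK h''
        · exact (Complex.ofReal_ne_zero.mpr hρ.ne') h''
      · norm_num at h'
  · have hne : ∀ t ∈ Set.Icc (0:ℝ) 1, k ^ 2 + (t:ℂ)^2 * (ρ:ℂ)^2 * K^2 ≠ 0 := by
      intro t ht h0
      have hnorm : ‖k^2‖ = ‖(t:ℂ)^2 * (ρ:ℂ)^2 * K^2‖ := by
        have : k^2 = -((t:ℂ)^2 * (ρ:ℂ)^2 * K^2) := by linear_combination h0
        rw [this, norm_neg]
      have e : ‖k‖^2 = t^2 * ρ^2 * ‖K‖^2 := by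
        calc ‖k‖^2 = ‖k^2‖ := (norm_pow k 2).symm
          _ = ‖(t:ℂ)^2‖ * ‖(ρ:ℂ)^2‖ * ‖K^2‖ := by rw [hnorm, norm_mul, norm_mul]
          _ = t^2 * ρ^2 * ‖K‖^2 := by
              rw [norm_pow, norm_pow, norm_pow, Complex.norm_real, Complex.norm_real,
                Real.norm_eq_abs, Real.norm_eq_abs, sq_abs, sq_abs]
      have ht2 : t^2 ≤ 1 := by nlinarith [ht.1, ht.2]
      nlinarith [e, hlt, mul_nonneg (sq_nonneg ρ) (sq_nonneg ‖K‖),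
        mul_nonneg (mul_nonneg (sq_nonneg t) (sq_nonneg ρ)) (sq_nonneg ‖K‖)]
    obtain ⟨f, hfc, hf0, hfsq⟩ := sqrt_lift (fun t => k ^ 2 + (t:ℂ)^2 * (ρ:ℂ)^2 * K^2)
      (by apply Continuous.continuousOn; fun_prop) hne k (by norm_num)
    refine ⟨f, hfc, hf0, hfsq, ?_⟩
    intro h
    have h1m : (1:ℝ) ∈ Set.Icc (0:ℝ) 1 := ⟨zero_le_one, le_refl 1⟩
    have := hfsq 1 h1m
    rw [h] at this
    exact hne 1 h1m (by rw [← this]; ring)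

private lemma rho_pick (KN b1 b2 b3 : ℝ) (hK : 0 < KN) (h1 : 0 < b1) (h2 : 0 < b2)
    (h3 : 0 < b3) :
    ∃ ρ : ℝ, 0 < ρ ∧ ρ^2 < 1 ∧ ρ^2 * KN < b1 ∧ ρ^2 * KN < b2 ∧ ρ^2 * KN < b3 := by
  set m : ℝ := min 1 (min (b1/KN) (min (b2/KN) (b3/KN))) with hm
  have hmpos : 0 < m := by positivity
  have hsq : Real.sqrt (m/2) ^ 2 = m/2 := Real.sq_sqrt (by linarith)
  have key : ∀ b : ℝ, 0 < b → m ≤ b/KN → (m/2) * KN < b := by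
    intro b hb hle
    have h' : m * KN ≤ b := (le_div_iff₀ hK).mp hle
    nlinarith
  refine ⟨Real.sqrt (m/2), Real.sqrt_pos.mpr (by linarith), ?_, ?_, ?_, ?_⟩
  · rw [hsq]
    have : m ≤ 1 := min_le_left _ _
    linarith
  · rw [hsq]
    exact key b1 h1 (le_trans (min_le_right _ _) (min_le_left _ _))
  · rw [hsq]
    exact key b2 h2 (le_trans (min_le_right _ _) (le_trans (min_le_right _ _) (min_le_left _ _)))
  · rw [hsq]
    exact key b3 h3 (le_trans (min_le_right _ _) (le_trans (min_le_right _ _) (min_le_right _ _)))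

/-- choose a nudging radius adapted to three coordinates `k1 k2 k3` over base `K`. -/
private lemma rho_pick' (K k1 k2 k3 : ℂ) (hK : K ≠ 0) :
    ∃ ρ : ℝ, 0 < ρ ∧ ρ^2 < 1 ∧
      (k1 = 0 ∨ ρ^2 * ‖K‖^2 < ‖k1‖^2) ∧ (k2 = 0 ∨ ρ^2 * ‖K‖^2 < ‖k2‖^2) ∧
      (k3 = 0 ∨ ρ^2 * ‖K‖^2 < ‖k3‖^2) := by
  have hKN : 0 < ‖K‖^2 := pow_pos (norm_pos_iff.mpr hK) 2
  have hb : ∀ k : ℂ, 0 < (if k = 0 then 1 else ‖k‖^2) := by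
    intro k
    by_cases h : k = 0
    · rw [if_pos h]; norm_num
    · rw [if_neg h]; exact pow_pos (norm_pos_iff.mpr h) 2
  obtain ⟨ρ, hρ, hρ1, hc1, hc2, hc3⟩ := rho_pick (‖K‖^2) _ _ _ hKN (hb k1) (hb k2) (hb k3)
  refine ⟨ρ, hρ, hρ1, ?_, ?_, ?_⟩
  · by_cases h : k1 = 0
    · exact Or.inl h
    · exact Or.inr (by rw [if_neg h] at hc1; exact hc1)
  · by_cases h : k2 = 0
    · exact Or.inl h
    · exact Or.inr (by rw [if_neg h] at hc2; exact hc2)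
  · by_cases h : k3 = 0
    · exact Or.inl h
    · exact Or.inr (by rw [if_neg h] at hc3; exact hc3)

/-! ### Nudging lemmas: make all coordinates nonzero -/

private lemma icc01 : (0:ℝ) ∈ Set.Icc (0:ℝ) 1 := ⟨le_refl 0, zero_le_one⟩
private lemma icc11 : (1:ℝ) ∈ Set.Icc (0:ℝ) 1 := ⟨zero_le_one, le_refl 1⟩

private lemma nudge_C (v : Fin 7 → ℂ) (he : Eqs v) (hv : v ≠ 0)
    (hA : v 0 ≠ 0) (hB : v 1 ≠ 0) (hC : v 2 ≠ 0) (hZ : v 5 ≠ 0) :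
    ∃ (w : Fin 7 → ℂ) (hw : w ≠ 0), Eqs w ∧ (∀ i, w i ≠ 0) ∧
      JoinedIn UpsilonC (Projectivization.mk ℂ v hv) (Projectivization.mk ℂ w hw) := by
  obtain ⟨ρ, hρ, hρ1, d1, d2, d3⟩ := rho_pick' (v 2) (v 3) (v 4) (v 6) hC
  obtain ⟨W, hWc, hW0, hWsq, hW1⟩ := w_path ρ
  obtain ⟨fX, hXc, hX0, hXsq, hX1⟩ := sq_path (v 2) (v 3) ρ hρ hC d1
  obtain ⟨fY, hYc, hY0, hYsq, hY1⟩ := sq_path (v 2) (v 4) ρ hρ hC d2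
  obtain ⟨fU, hUc, hU0, hUsq, hU1⟩ := sq_path (v 2) (v 6) ρ hρ hC d3
  set p : ℝ → (Fin 7 → ℂ) := fun t => ![v 0, v 1, W t * v 2, fX t, fY t, v 5, fU t] with hp
  have hcont : ContinuousOn p (Set.Icc 0 1) :=
    contOn_vec7 continuousOn_const continuousOn_const (hWc.mul continuousOn_const)
      hXc hYc continuousOn_const hUc
  have hne : ∀ t ∈ Set.Icc (0:ℝ) 1, p t ≠ 0 := fun t _ h0 => hA (congrFun h0 0)
  have heq : ∀ t ∈ Set.Icc (0:ℝ) 1, Eqs (p t) := by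
    intro t ht
    have hW := hWsq t ht
    have hX := hXsq t ht
    have hY := hYsq t ht
    have hU := hUsq t ht
    obtain ⟨e1, e2, e3, e4⟩ := he
    refine ⟨?_, ?_, ?_, ?_⟩
    · show v 0^2 + v 1^2 - v 5^2 = 0
      exact e1
    · show v 1^2 + (W t * v 2)^2 - fX t^2 = 0
      linear_combination e2 + (v 2^2) * hW - hX
    · show (W t * v 2)^2 + v 0^2 - fY t^2 = 0
      linear_combination e3 + (v 2^2) * hW - hY
    · show v 0^2 + fX t^2 - fU t^2 = 0
      linear_combination e4 + hX - hU
  have hp0 : p 0 = v := by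
    rw [eta_vec7 v]
    exact vec7_eq rfl rfl (by rw [hW0, one_mul]) hX0 hY0 rfl hU0
  refine ⟨p 1, hne 1 icc11, heq 1 icc11, ?_, ?_⟩
  · intro i
    fin_cases i
    · exact hA
    · exact hB
    · exact mul_ne_zero hW1 hC
    · exact hX1
    · exact hY1
    · exact hZ
    · exact hU1
  · have j := joinedIn_of p hcont hne heq (hne 0 icc01) (hne 1 icc11)
    rw [mk_eq_of_eq _ hv hp0] at j
    exact j

private lemma nudge_B (v : Fin 7 → ℂ) (he : Eqs v) (hv : v ≠ 0)
    (hA : v 0 ≠ 0) (hB : v 1 ≠ 0) (hC : v 2 ≠ 0) (hY : v 4 ≠ 0) :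
    ∃ (w : Fin 7 → ℂ) (hw : w ≠ 0), Eqs w ∧ (∀ i, w i ≠ 0) ∧
      JoinedIn UpsilonC (Projectivization.mk ℂ v hv) (Projectivization.mk ℂ w hw) := by
  obtain ⟨ρ, hρ, hρ1, d1, d2, d3⟩ := rho_pick' (v 1) (v 3) (v 5) (v 6) hB
  obtain ⟨W, hWc, hW0, hWsq, hW1⟩ := w_path ρ
  obtain ⟨fX, hXc, hX0, hXsq, hX1⟩ := sq_path (v 1) (v 3) ρ hρ hB d1
  obtain ⟨fZ, hZc, hZ0, hZsq, hZ1⟩ := sq_path (v 1) (v 5) ρ hρ hB d2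
  obtain ⟨fU, hUc, hU0, hUsq, hU1⟩ := sq_path (v 1) (v 6) ρ hρ hB d3
  set p : ℝ → (Fin 7 → ℂ) := fun t => ![v 0, W t * v 1, v 2, fX t, v 4, fZ t, fU t] with hp
  have hcont : ContinuousOn p (Set.Icc 0 1) :=
    contOn_vec7 continuousOn_const (hWc.mul continuousOn_const) continuousOn_const
      hXc continuousOn_const hZc hUc
  have hne : ∀ t ∈ Set.Icc (0:ℝ) 1, p t ≠ 0 := fun t _ h0 => hA (congrFun h0 0)
  have heq : ∀ t ∈ Set.Icc (0:ℝ) 1, Eqs (p t) := by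
    intro t ht
    have hW := hWsq t ht
    have hX := hXsq t ht
    have hZ := hZsq t ht
    have hU := hUsq t ht
    obtain ⟨e1, e2, e3, e4⟩ := he
    refine ⟨?_, ?_, ?_, ?_⟩
    · show v 0^2 + (W t * v 1)^2 - fZ t^2 = 0
      linear_combination e1 + (v 1^2) * hW - hZ
    · show (W t * v 1)^2 + v 2^2 - fX t^2 = 0
      linear_combination e2 + (v 1^2) * hW - hX
    · show v 2^2 + v 0^2 - v 4^2 = 0
      exact e3
    · show v 0^2 + fX t^2 - fU t^2 = 0
      linear_combination e4 + hX - hU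
  have hp0 : p 0 = v := by
    rw [eta_vec7 v]
    exact vec7_eq rfl (by rw [hW0, one_mul]) rfl hX0 rfl hZ0 hU0
  refine ⟨p 1, hne 1 icc11, heq 1 icc11, ?_, ?_⟩
  · intro i
    fin_cases i
    · exact hA
    · exact mul_ne_zero hW1 hB
    · exact hC
    · exact hX1
    · exact hY
    · exact hZ1
    · exact hU1
  · have j := joinedIn_of p hcont hne heq (hne 0 icc01) (hne 1 icc11)
    rw [mk_eq_of_eq _ hv hp0] at j
    exact j

private lemma nudge_A (v : Fin 7 → ℂ) (he : Eqs v) (hv : v ≠ 0)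
    (hA : v 0 ≠ 0) (hB : v 1 ≠ 0) (hC : v 2 ≠ 0) (hX : v 3 ≠ 0) :
    ∃ (w : Fin 7 → ℂ) (hw : w ≠ 0), Eqs w ∧ (∀ i, w i ≠ 0) ∧
      JoinedIn UpsilonC (Projectivization.mk ℂ v hv) (Projectivization.mk ℂ w hw) := by
  obtain ⟨ρ, hρ, hρ1, d1, d2, d3⟩ := rho_pick' (v 0) (v 4) (v 5) (v 6) hA
  obtain ⟨W, hWc, hW0, hWsq, hW1⟩ := w_path ρ
  obtain ⟨fY, hYc, hY0, hYsq, hY1⟩ := sq_path (v 0) (v 4) ρ hρ hA d1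
  obtain ⟨fZ, hZc, hZ0, hZsq, hZ1⟩ := sq_path (v 0) (v 5) ρ hρ hA d2
  obtain ⟨fU, hUc, hU0, hUsq, hU1⟩ := sq_path (v 0) (v 6) ρ hρ hA d3
  set p : ℝ → (Fin 7 → ℂ) := fun t => ![W t * v 0, v 1, v 2, v 3, fY t, fZ t, fU t] with hp
  have hcont : ContinuousOn p (Set.Icc 0 1) :=
    contOn_vec7 (hWc.mul continuousOn_const) continuousOn_const continuousOn_const
      continuousOn_const hYc hZc hUc
  have hne : ∀ t ∈ Set.Icc (0:ℝ) 1, p t ≠ 0 := fun t _ h0 => hB (congrFun h0 1)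
  have heq : ∀ t ∈ Set.Icc (0:ℝ) 1, Eqs (p t) := by
    intro t ht
    have hW := hWsq t ht
    have hY := hYsq t ht
    have hZ := hZsq t ht
    have hU := hUsq t ht
    obtain ⟨e1, e2, e3, e4⟩ := he
    refine ⟨?_, ?_, ?_, ?_⟩
    · show (W t * v 0)^2 + v 1^2 - fZ t^2 = 0
      linear_combination e1 + (v 0^2) * hW - hZ
    · show v 1^2 + v 2^2 - v 3^2 = 0
      exact e2
    · show v 2^2 + (W t * v 0)^2 - fY t^2 = 0
      linear_combination e3 + (v 0^2) * hW - hY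
    · show (W t * v 0)^2 + v 3^2 - fU t^2 = 0
      linear_combination e4 + (v 0^2) * hW - hU
  have hp0 : p 0 = v := by
    rw [eta_vec7 v]
    exact vec7_eq (by rw [hW0, one_mul]) rfl rfl rfl hY0 hZ0 hU0
  refine ⟨p 1, hne 1 icc11, heq 1 icc11, ?_, ?_⟩
  · intro i
    fin_cases i
    · exact mul_ne_zero hW1 hA
    · exact hB
    · exact hC
    · exact hX
    · exact hY1
    · exact hZ1
    · exact hU1
  · have j := joinedIn_of p hcont hne heq (hne 0 icc01) (hne 1 icc11)
    rw [mk_eq_of_eq _ hv hp0] at j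
    exact j

/-! ### Shrinking the `C`-coordinate to zero -/

private lemma root_mem {k c z r : ℂ} (hc : c ≠ 0) (hr : r^2 = -(k^2)/c^2)
    (h : k^2 + z^2*c^2 = 0) : z = r ∨ z = -r := by
  apply sq_cases
  rw [hr]
  field_simp
  linear_combination h

private lemma shrink_C (v : Fin 7 → ℂ) (he : Eqs v) (hv : v ≠ 0) (hall : ∀ i, v i ≠ 0) :
    ∃ (w : Fin 7 → ℂ) (hw : w ≠ 0), Eqs w ∧ w 2 = 0 ∧
      JoinedIn UpsilonC (Projectivization.mk ℂ v hv) (Projectivization.mk ℂ w hw) := by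
  obtain ⟨e1, e2, e3, e4⟩ := he
  have hC2 : v 2 ≠ 0 := hall 2
  obtain ⟨r1, hr1⟩ := exists_sqrt (-(v 1^2)/(v 2^2))
  obtain ⟨r2, hr2⟩ := exists_sqrt (-(v 0^2)/(v 2^2))
  obtain ⟨r3, hr3⟩ := exists_sqrt (-(v 5^2)/(v 2^2))
  set S : Set ℂ :=
    {z | (v 1^2 + z^2*v 2^2) * ((v 0^2 + z^2*v 2^2) * (v 5^2 + z^2*v 2^2)) = 0} with hS
  have hSsub : S ⊆ {r1, -r1, r2, -r2, r3, -r3} := by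
    intro z hz
    simp only [hS, Set.mem_setOf_eq] at hz
    simp only [Set.mem_insert_iff, Set.mem_singleton_iff]
    rcases mul_eq_zero.mp hz with h | h
    · rcases root_mem hC2 hr1 h with rfl | rfl
      · tauto
      · tauto
    · rcases mul_eq_zero.mp h with h' | h'
      · rcases root_mem hC2 hr2 h' with rfl | rfl
        · tauto
        · tauto
      · rcases root_mem hC2 hr3 h' with rfl | rfl
        · tauto
        · tauto
  have hScount : S.Countable := (Set.toFinite _).countable.mono hSsub
  have hpc : IsPathConnected Sᶜ :=
    hScount.isPathConnected_compl_of_one_lt_rank one_lt_rank_C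
  have hX2 : v 1^2 + 1^2*v 2^2 = v 3^2 := by linear_combination e2
  have hY2 : v 0^2 + 1^2*v 2^2 = v 4^2 := by linear_combination e3
  have hU2 : v 5^2 + 1^2*v 2^2 = v 6^2 := by linear_combination -e1 + e2 + e4
  have hm1 : (1:ℂ) ∈ Sᶜ := by
    simp only [hS, Set.mem_compl_iff, Set.mem_setOf_eq]
    rw [hX2, hY2, hU2]
    exact mul_ne_zero (pow_ne_zero 2 (hall 3))
      (mul_ne_zero (pow_ne_zero 2 (hall 4)) (pow_ne_zero 2 (hall 6)))
  have hm0 : (0:ℂ) ∈ Sᶜ := by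
    simp only [hS, Set.mem_compl_iff, Set.mem_setOf_eq]
    have t1 : v 1^2 + 0^2*v 2^2 = v 1^2 := by ring
    have t2 : v 0^2 + 0^2*v 2^2 = v 0^2 := by ring
    have t3 : v 5^2 + 0^2*v 2^2 = v 5^2 := by ring
    rw [t1, t2, t3]
    exact mul_ne_zero (pow_ne_zero 2 (hall 1))
      (mul_ne_zero (pow_ne_zero 2 (hall 0)) (pow_ne_zero 2 (hall 5)))
  obtain ⟨γd, hγd⟩ := hpc.joinedIn 1 hm1 0 hm0
  set d : ℝ → ℂ := ⇑γd.extend with hd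
  have hdc : Continuous d := γd.continuous_extend
  have hd0 : d 0 = 1 := γd.extend_zero
  have hd1 : d 1 = 0 := γd.extend_one
  have hfac : ∀ t ∈ Set.Icc (0:ℝ) 1,
      v 1^2 + (d t)^2*v 2^2 ≠ 0 ∧ v 0^2 + (d t)^2*v 2^2 ≠ 0 ∧ v 5^2 + (d t)^2*v 2^2 ≠ 0 := by
    intro t ht
    have hmem : d t ∈ Sᶜ := by
      rw [hd, Path.extend_apply γd ht]
      exact hγd _
    simp only [hS, Set.mem_compl_iff, Set.mem_setOf_eq] at hmem
    refine ⟨fun h => hmem ?_, fun h => hmem ?_, fun h => hmem ?_⟩ <;> simp [h]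
  obtain ⟨fX, hXc, hX0, hXsq⟩ := sqrt_lift (fun t => v 1^2 + (d t)^2 * v 2^2)
    ((continuous_const.add ((hdc.pow 2).mul continuous_const)).continuousOn)
    (fun t ht => (hfac t ht).1) (v 3)
    (by show v 3^2 = v 1^2 + (d 0)^2 * v 2^2; rw [hd0]; linear_combination -hX2)
  obtain ⟨fY, hYc, hY0, hYsq⟩ := sqrt_lift (fun t => v 0^2 + (d t)^2 * v 2^2)
    ((continuous_const.add ((hdc.pow 2).mul continuous_const)).continuousOn)
    (fun t ht => (hfac t ht).2.1) (v 4)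
    (by show v 4^2 = v 0^2 + (d 0)^2 * v 2^2; rw [hd0]; linear_combination -hY2)
  obtain ⟨fU, hUc, hU0, hUsq⟩ := sqrt_lift (fun t => v 5^2 + (d t)^2 * v 2^2)
    ((continuous_const.add ((hdc.pow 2).mul continuous_const)).continuousOn)
    (fun t ht => (hfac t ht).2.2) (v 6)
    (by show v 6^2 = v 5^2 + (d 0)^2 * v 2^2; rw [hd0]; linear_combination -hU2)
  set p : ℝ → (Fin 7 → ℂ) := fun t => ![v 0, v 1, d t * v 2, fX t, fY t, v 5, fU t] with hp
  have hcont : ContinuousOn p (Set.Icc 0 1) :=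
    contOn_vec7 continuousOn_const continuousOn_const (hdc.continuousOn.mul continuousOn_const)
      hXc hYc continuousOn_const hUc
  have hne : ∀ t ∈ Set.Icc (0:ℝ) 1, p t ≠ 0 := fun t _ h0 => (hall 0) (congrFun h0 0)
  have heq : ∀ t ∈ Set.Icc (0:ℝ) 1, Eqs (p t) := by
    intro t ht
    have hX := hXsq t ht
    have hY := hYsq t ht
    have hU := hUsq t ht
    refine ⟨?_, ?_, ?_, ?_⟩
    · show v 0^2 + v 1^2 - v 5^2 = 0
      exact e1
    · show v 1^2 + (d t * v 2)^2 - fX t^2 = 0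
      linear_combination -hX
    · show (d t * v 2)^2 + v 0^2 - fY t^2 = 0
      linear_combination -hY
    · show v 0^2 + fX t^2 - fU t^2 = 0
      linear_combination e1 + hX - hU
  have hp0 : p 0 = v := by
    rw [eta_vec7 v]
    exact vec7_eq rfl rfl (by rw [hd0, one_mul]) hX0 hY0 rfl hU0
  refine ⟨p 1, hne 1 icc11, heq 1 icc11, ?_, ?_⟩
  · show d 1 * v 2 = 0
    rw [hd1, zero_mul]
  · have j := joinedIn_of p hcont hne heq (hne 0 icc01) (hne 1 icc11)
    rw [mk_eq_of_eq _ hv hp0] at j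
    exact j

/-! ### The master lemma -/

private lemma joined_to_base (v : Fin 7 → ℂ) (hv : v ≠ 0) (he : Eqs v) :
    JoinedIn UpsilonC (Projectivization.mk ℂ v hv) (mkQ 1 1 1) := by
  by_cases hA : v 0 = 0
  · exact joined_capA v hv he hA
  by_cases hB : v 1 = 0
  · exact joined_capB v hv he hB
  by_cases hC : v 2 = 0
  · exact joined_capC v hv he hC
  have step : ∃ (w : Fin 7 → ℂ) (hw : w ≠ 0), Eqs w ∧ (∀ i, w i ≠ 0) ∧
      JoinedIn UpsilonC (Projectivization.mk ℂ v hv) (Projectivization.mk ℂ w hw) := by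
    by_cases hY : v 4 = 0
    · by_cases hX : v 3 = 0
      · have hZ : v 5 ≠ 0 := by
          intro hZ0
          obtain ⟨e1, e2, e3, e4⟩ := he
          have f1 : v 1^2 + v 2^2 = 0 := by linear_combination e2 + v 3 * hX
          have f2 : v 2^2 + v 0^2 = 0 := by linear_combination e3 + v 4 * hY
          have f3 : v 0^2 + v 1^2 = 0 := by linear_combination e1 + v 5 * hZ0
          have : v 1^2 = 0 := by linear_combination (f3 + f1 - f2)/2
          exact hB (pow_eq_zero_iff (by norm_num) |>.mp this)
        exact nudge_C v he hv hA hB hC hZ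
      · exact nudge_A v he hv hA hB hC hX
    · exact nudge_B v he hv hA hB hC hY
  obtain ⟨w, hw, hew, hall, j1⟩ := step
  obtain ⟨w2, hw2, hew2, hw2C, j2⟩ := shrink_C w hew hw hall
  exact (j1.trans j2).trans (joined_capC w2 hw2 hew2 hw2C)

end UpsilonAux

/-- `Υ(ℂ)` is path-connected. -/
theorem upsilonC_pathConnected : PathConnectedSpace ↥UpsilonC := by
  rw [← isPathConnected_iff_pathConnectedSpace]
  refine ⟨UpsilonAux.mkQ 1 1 1,
    UpsilonAux.mkQ_mem (by norm_num) (by norm_num) (by norm_num), ?_⟩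
  intro p hp
  obtain ⟨v, hv, hmk, h1, h2, h3, h4⟩ := hp
  rw [← hmk]
  exact (UpsilonAux.joined_to_base v hv ⟨h1, h2, h3, h4⟩).symm
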